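/- arXiv:2410.11797 — 2 statements merged into one kernel-verified Lean document; each statement's English description precedes it below -/
import Mathlib

section
/- Let b ∈ {0,1,2,3}^p and suppose there exists a tuple (i₁,…,iₚ) ∈ {1,…,n}^p such that B(i⃗) = b and R(i⃗) = 0, where R(i⃗) = 1 iff some index iₖ satisfies i_l ∉ N_{iₖ} for all l ≠ k, and B is defined by: Bₖ = 0 if N_{iₖ} ∩ (∪_{l<k} N_{i_l}) = ∅; Bₖ = 3 if iₖ ∈ ∪_{l<k, B_l=0} N_{i_l}; Bₖ = 1 if iₖ ∉ N_{iₖ} ∩ (∪_{l<k} N_{i_l}) ≠ ∅; Bₖ = 2 otherwise. Then κ₀(b) ≤ κ₃(b), where κ_s(b) counts the coordinates of b equal to s. -/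
open Finset

theorem kappa0_le_kappa3 (n p : ℕ)
    (N : Fin n → Finset (Fin n))
    (hself : ∀ i, i ∈ N i)
    (hsym : ∀ i j, j ∈ N i ↔ i ∈ N j)
    (i : Fin p → Fin n) (b : Fin p → ℕ)
    -- R(i⃗) = 0 : every k has some l ≠ k with i_l ∈ N_{i_k}
    (hR : ∀ k : Fin p, ∃ l : Fin p, l ≠ k ∧ i l ∈ N (i k))
    -- B(i⃗) = b
    (hb : ∀ k : Fin p,
      b k =
        if N (i k) ∩ ((Finset.univ.filter (fun l : Fin p => l < k)).biUnion
            (fun l => N (i l))) = ∅ then 0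
        else if i k ∉ N (i k) ∩ ((Finset.univ.filter (fun l : Fin p => l < k)).biUnion
            (fun l => N (i l))) then 1
        else if i k ∈ (Finset.univ.filter (fun l : Fin p => l < k ∧ b l = 0)).biUnion
            (fun l => N (i l)) then 3
        else 2) :
    (Finset.univ.filter (fun k : Fin p => b k = 0)).card ≤
      (Finset.univ.filter (fun k : Fin p => b k = 3)).card := by
  classical
  -- If b k = 0 then the intersection with earlier neighborhoods is empty
  have hzero : ∀ k : Fin p, b k = 0 →
      N (i k) ∩ ((Finset.univ.filter (fun l : Fin p => l < k)).biUnion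
        (fun l => N (i l))) = ∅ := by
    intro k hk
    rw [hb k] at hk
    split_ifs at hk with h1 h2 h3
    · exact h1
    all_goals omega
  -- for k with b k = 0, the witness from hR lies strictly after k
  have hgt : ∀ k : Fin p, b k = 0 → k < (hR k).choose := by
    intro k hk
    obtain ⟨hne, hmem⟩ := (hR k).choose_spec
    rcases lt_or_gt_of_ne hne with h | h
    · exfalso
      have : i (hR k).choose ∈ N (i k) ∩
          ((Finset.univ.filter (fun l : Fin p => l < k)).biUnion (fun l => N (i l))) := by
        simp only [Finset.mem_inter, Finset.mem_biUnion, Finset.mem_filter,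
          Finset.mem_univ, true_and]
        exact ⟨hmem, (hR k).choose, h, hself _⟩
      rw [hzero k hk] at this
      exact absurd this (Finset.notMem_empty _)
    · exact h
  apply Finset.card_le_card_of_injOn (fun k => (hR k).choose)
  · intro k hk
    simp only [Finset.mem_coe, Finset.mem_filter, Finset.mem_univ, true_and] at hk ⊢
    obtain ⟨hne, hmem⟩ := (hR k).choose_spec
    set l := (hR k).choose with hl
    have hkl : k < l := hgt k hk
    rw [hb l]
    rw [if_neg, if_neg, if_pos]
    · -- third condition: i l ∈ ⋃_{m < l, b m = 0} N (i m)
      simp only [Finset.mem_biUnion, Finset.mem_filter, Finset.mem_univ, true_and]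
      exact ⟨k, ⟨hkl, hk⟩, hmem⟩
    · -- i l ∈ N (i l) ∩ union
      simp only [not_not, Finset.mem_inter, Finset.mem_biUnion, Finset.mem_filter,
        Finset.mem_univ, true_and]
      exact ⟨hself _, k, hkl, hmem⟩
    · -- intersection nonempty
      intro hemp
      have : i l ∈ N (i l) ∩
          ((Finset.univ.filter (fun m : Fin p => m < l)).biUnion (fun m => N (i m))) := by
        simp only [Finset.mem_inter, Finset.mem_biUnion, Finset.mem_filter,
          Finset.mem_univ, true_and]
        exact ⟨hself _, k, hkl, hmem⟩
      rw [hemp] at this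
      exact absurd this (Finset.notMem_empty _)
  · intro k hk k' hk' heq
    simp only [Finset.coe_filter, Set.mem_setOf_eq, Finset.mem_univ, true_and] at hk hk'
    by_contra hne
    have heq' : (hR k).choose = (hR k').choose := heq
    -- wlog k < k'
    obtain ⟨hm1, hm2⟩ := (hR k).choose_spec
    obtain ⟨hm1', hm2'⟩ := (hR k').choose_spec
    have heq' : (hR k).choose = (hR k').choose := heq
    rcases lt_or_gt_of_ne hne with h | h
    · have : i (hR k').choose ∈ N (i k') ∩
          ((Finset.univ.filter (fun m : Fin p => m < k')).biUnion (fun m => N (i m))) := by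
        simp only [Finset.mem_inter, Finset.mem_biUnion, Finset.mem_filter,
          Finset.mem_univ, true_and]
        exact ⟨hm2', k, h, heq' ▸ hm2⟩
      rw [hzero k' hk'] at this
      exact absurd this (Finset.notMem_empty _)
    · have : i (hR k).choose ∈ N (i k) ∩
          ((Finset.univ.filter (fun m : Fin p => m < k)).biUnion (fun m => N (i m))) := by
        simp only [Finset.mem_inter, Finset.mem_biUnion, Finset.mem_filter,
          Finset.mem_univ, true_and]
        exact ⟨hm2, k', h, heq'.symm ▸ hm2'⟩
      rw [hzero k hk] at this
      exact absurd this (Finset.notMem_empty _)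
end

section
/- Let W₁,…,Wₙ be bounded random variables with |Wᵢ| ≤ M a.s., let h : {1,…,n}² → {0,1} be such that ∑_{j} h(i,j) ≤ K for every i, and suppose (Wᵢ Wⱼ) and (Wₖ W_l) are uncorrelated unless the index sets {i,j} and {k,l} are linked through h (i.e., h(i,j,k,l) = 0 implies zero covariance, where h(i,j,k,l) = h(i,j)·h(k,l)·1{some pair among (i,k),(i,l),(j,k),(j,l) is h-adjacent}). If Zᵢ = Wᵢ − E Wᵢ, then Var(∑_{i,j} h(i,j) Zᵢ Zⱼ) ≤ C · n · K³ · M⁴ for a universal constant C. -/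
open MeasureTheory ProbabilityTheory

private lemma hac_count {n : ℕ} (g h : Fin n → Fin n → ℝ) (Kr : ℝ)
    (hg0 : ∀ i j, 0 ≤ g i j) (hh0 : ∀ i j, 0 ≤ h i j)
    (hgsym : ∀ i j, g i j = g j i)
    (hgK : ∀ i, ∑ j, g i j ≤ Kr) (hhK : ∀ i, ∑ j, h i j ≤ Kr)
    (hKr : 0 ≤ Kr) :
    ∑ i, ∑ j, ∑ k, ∑ l, g i j * g k l * (h i k + h i l + h j k + h j l)
      ≤ 4 * n * Kr ^ 3 := by
  have hgcol : ∀ j, ∑ i, g i j ≤ Kr := fun j => by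
    calc ∑ i, g i j = ∑ i, g j i := Finset.sum_congr rfl fun i _ => hgsym i j
    _ ≤ Kr := hgK j
  have claimA : ∀ p : Fin n, ∑ k, ∑ l, g k l * h p k ≤ Kr ^ 2 := by
    intro p
    calc ∑ k, ∑ l, g k l * h p k = ∑ k, (∑ l, g k l) * h p k :=
          Finset.sum_congr rfl fun k _ => (Finset.sum_mul _ _ _).symm
    _ ≤ ∑ k, Kr * h p k :=
          Finset.sum_le_sum fun k _ => mul_le_mul_of_nonneg_right (hgK k) (hh0 p k)
    _ = Kr * ∑ k, h p k := (Finset.mul_sum _ _ _).symm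
    _ ≤ Kr * Kr := mul_le_mul_of_nonneg_left (hhK p) hKr
    _ = Kr ^ 2 := (sq Kr).symm
  have claimB : ∀ p : Fin n, ∑ k, ∑ l, g k l * h p l ≤ Kr ^ 2 := by
    intro p
    rw [Finset.sum_comm]
    calc ∑ l, ∑ k, g k l * h p l = ∑ l, (∑ k, g k l) * h p l :=
          Finset.sum_congr rfl fun l _ => (Finset.sum_mul _ _ _).symm
    _ ≤ ∑ l, Kr * h p l :=
          Finset.sum_le_sum fun l _ => mul_le_mul_of_nonneg_right (hgcol l) (hh0 p l)
    _ = Kr * ∑ l, h p l := (Finset.mul_sum _ _ _).symm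
    _ ≤ Kr * Kr := mul_le_mul_of_nonneg_left (hhK p) hKr
    _ = Kr ^ 2 := (sq Kr).symm
  have hmain : ∀ (f : Fin n → Fin n → Fin n → Fin n → ℝ),
      (∀ i j, ∑ k, ∑ l, g k l * f i j k l ≤ Kr ^ 2) →
      ∑ i, ∑ j, ∑ k, ∑ l, g i j * (g k l * f i j k l) ≤ n * Kr ^ 3 := by
    intro f hf
    calc ∑ i, ∑ j, ∑ k, ∑ l, g i j * (g k l * f i j k l)
        = ∑ i, ∑ j, g i j * ∑ k, ∑ l, g k l * f i j k l := by
          refine Finset.sum_congr rfl fun i _ => Finset.sum_congr rfl fun j _ => ?_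
          rw [Finset.mul_sum]
          exact Finset.sum_congr rfl fun k _ => (Finset.mul_sum _ _ _).symm
      _ ≤ ∑ i, ∑ j, g i j * Kr ^ 2 :=
          Finset.sum_le_sum fun i _ => Finset.sum_le_sum fun j _ =>
            mul_le_mul_of_nonneg_left (hf i j) (hg0 i j)
      _ = ∑ i, (∑ j, g i j) * Kr ^ 2 :=
          Finset.sum_congr rfl fun i _ => (Finset.sum_mul _ _ _).symm
      _ ≤ ∑ i : Fin n, Kr * Kr ^ 2 :=
          Finset.sum_le_sum fun i _ => mul_le_mul_of_nonneg_right (hgK i) (by positivity)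
      _ = n * Kr ^ 3 := by
          rw [Finset.sum_const, Finset.card_univ, Fintype.card_fin, nsmul_eq_mul]; ring
  calc ∑ i, ∑ j, ∑ k, ∑ l, g i j * g k l * (h i k + h i l + h j k + h j l)
      = ∑ i, ∑ j, ∑ k, ∑ l, (g i j * (g k l * h i k) + g i j * (g k l * h i l)
          + g i j * (g k l * h j k) + g i j * (g k l * h j l)) := by
        refine Finset.sum_congr rfl fun i _ => Finset.sum_congr rfl fun j _ =>
          Finset.sum_congr rfl fun k _ => Finset.sum_congr rfl fun l _ => by ring
    _ = (∑ i, ∑ j, ∑ k, ∑ l, g i j * (g k l * h i k))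
        + (∑ i, ∑ j, ∑ k, ∑ l, g i j * (g k l * h i l))
        + (∑ i, ∑ j, ∑ k, ∑ l, g i j * (g k l * h j k))
        + (∑ i, ∑ j, ∑ k, ∑ l, g i j * (g k l * h j l)) := by
        simp only [Finset.sum_add_distrib]
    _ ≤ n * Kr ^ 3 + n * Kr ^ 3 + n * Kr ^ 3 + n * Kr ^ 3 := by
        gcongr ?_ + ?_ + ?_ + ?_
        · exact hmain _ fun i j => claimA i
        · exact hmain _ fun i j => claimB i
        · exact hmain _ fun i j => claimA j
        · exact hmain _ fun i j => claimB j
    _ = 4 * n * Kr ^ 3 := by ring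

theorem hac_variance_bound :
    ∃ C : ℝ, 0 < C ∧
      ∀ (Ω : Type) (_ : MeasurableSpace Ω) (P : Measure Ω),
        IsProbabilityMeasure P →
        ∀ (n K : ℕ) (M : ℝ), 0 ≤ M →
        ∀ (W : Fin n → Ω → ℝ),
          (∀ i, Measurable (W i)) →
          (∀ᵐ ω ∂P, ∀ i, |W i ω| ≤ M) →
          ∀ (h : Fin n → Fin n → ℝ),
            (∀ i j, h i j = 0 ∨ h i j = 1) →
            (∀ i, ∑ j, h i j ≤ (K : ℝ)) →
            ∀ (Z : Fin n → Ω → ℝ),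
              (∀ i, Z i = fun ω => W i ω - ∫ ω', W i ω' ∂P) →
              -- cov((Zᵢ Zⱼ), (Zₖ Z_l)) = 0 unless the pairs are h-linked
              (∀ i j k l : Fin n,
                ¬(h i j = 1 ∧ h k l = 1 ∧
                    (h i k = 1 ∨ h i l = 1 ∨ h j k = 1 ∨ h j l = 1)) →
                ∫ ω, (Z i ω * Z j ω - ∫ ω', Z i ω' * Z j ω' ∂P) *
                      (Z k ω * Z l ω - ∫ ω', Z k ω' * Z l ω' ∂P) ∂P = 0) →
              variance (fun ω => ∑ i, ∑ j, h i j * Z i ω * Z j ω) P ≤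
                C * n * (K : ℝ) ^ 3 * M ^ 4 := by
  refine ⟨256, by norm_num, ?_⟩
  intro Ω mΩ P hP n K M hM W hWmeas hWbd h h01 hrow Z hZdef hcov
  have habs : ∀ f : Ω → ℝ, |∫ ω, f ω ∂P| ≤ ∫ ω, |f ω| ∂P := fun f => by
    simpa [Real.norm_eq_abs] using norm_integral_le_integral_norm (μ := P) f
  have hnn : ∀ i j, (0:ℝ) ≤ h i j := fun i j => by rcases h01 i j with e | e <;> rw [e] <;> norm_num
  have hle1 : ∀ i j, h i j ≤ 1 := fun i j => by rcases h01 i j with e | e <;> rw [e] <;> norm_num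
  have hKnn : (0:ℝ) ≤ (K : ℝ) := Nat.cast_nonneg K
  have hZmeas : ∀ i, Measurable (Z i) := fun i => by
    rw [hZdef i]; exact (hWmeas i).sub measurable_const
  have hWint : ∀ i, Integrable (W i) P := fun i => by
    refine (integrable_const M).mono' (hWmeas i).aestronglyMeasurable ?_
    filter_upwards [hWbd] with ω hω
    simpa [Real.norm_eq_abs] using hω i
  have hEW : ∀ i, |∫ ω, W i ω ∂P| ≤ M := by
    intro i
    calc |∫ ω, W i ω ∂P| ≤ ∫ ω, |W i ω| ∂P := habs _
    _ ≤ ∫ _ω, M ∂P := by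
        refine integral_mono_ae (hWint i).abs (integrable_const M) ?_
        filter_upwards [hWbd] with ω hω using hω i
    _ = M := by simp
  have hZbd : ∀ᵐ ω ∂P, ∀ i, |Z i ω| ≤ 2 * M := by
    filter_upwards [hWbd] with ω hω i
    rw [hZdef i]
    have h1 : |W i ω - ∫ ω', W i ω' ∂P| ≤ |W i ω| + |∫ ω', W i ω' ∂P| := by
      have := abs_add_le (W i ω) (-(∫ ω', W i ω' ∂P))
      simpa [sub_eq_add_neg] using this
    calc |W i ω - ∫ ω', W i ω' ∂P| ≤ |W i ω| + |∫ ω', W i ω' ∂P| := h1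
    _ ≤ M + M := add_le_add (hω i) (hEW i)
    _ = 2 * M := by ring
  have hZZmeas : ∀ i j, Measurable (fun ω => Z i ω * Z j ω) := fun i j =>
    (hZmeas i).mul (hZmeas j)
  have hZZbd : ∀ᵐ ω ∂P, ∀ i j, |Z i ω * Z j ω| ≤ 4 * M ^ 2 := by
    filter_upwards [hZbd] with ω hω i j
    calc |Z i ω * Z j ω| = |Z i ω| * |Z j ω| := abs_mul _ _
    _ ≤ (2 * M) * (2 * M) :=
        mul_le_mul (hω i) (hω j) (abs_nonneg _) (by positivity)
    _ = 4 * M ^ 2 := by ring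
  have hZZint : ∀ i j, Integrable (fun ω => Z i ω * Z j ω) P := fun i j => by
    refine (integrable_const (4 * M ^ 2)).mono' (hZZmeas i j).aestronglyMeasurable ?_
    filter_upwards [hZZbd] with ω hω
    rw [Real.norm_eq_abs]; exact hω i j
  set μ2 : Fin n → Fin n → ℝ := fun i j => ∫ ω, Z i ω * Z j ω ∂P with hμ2def
  have hμ2bd : ∀ i j, |μ2 i j| ≤ 4 * M ^ 2 := by
    intro i j
    calc |μ2 i j| ≤ ∫ ω, |Z i ω * Z j ω| ∂P := habs _
    _ ≤ ∫ _ω, 4 * M ^ 2 ∂P := by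
        refine integral_mono_ae (hZZint i j).abs (integrable_const _) ?_
        filter_upwards [hZZbd] with ω hω using hω i j
    _ = 4 * M ^ 2 := by simp
  set X : Fin n → Fin n → Ω → ℝ := fun i j ω => Z i ω * Z j ω - μ2 i j with hXdef
  have hXmeas : ∀ i j, Measurable (X i j) := fun i j => (hZZmeas i j).sub measurable_const
  have hXbd : ∀ᵐ ω ∂P, ∀ i j, |X i j ω| ≤ 8 * M ^ 2 := by
    filter_upwards [hZZbd] with ω hω i j
    have h1 : |X i j ω| ≤ |Z i ω * Z j ω| + |μ2 i j| := by
      have := abs_add_le (Z i ω * Z j ω) (-(μ2 i j))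
      simpa [hXdef, sub_eq_add_neg] using this
    calc |X i j ω| ≤ |Z i ω * Z j ω| + |μ2 i j| := h1
    _ ≤ 4 * M ^ 2 + 4 * M ^ 2 := add_le_add (hω i j) (hμ2bd i j)
    _ = 8 * M ^ 2 := by ring
  have hXint : ∀ i j, Integrable (X i j) P := fun i j => (hZZint i j).sub (integrable_const _)
  have hXXbd : ∀ᵐ ω ∂P, ∀ i j k l, |X i j ω * X k l ω| ≤ 64 * M ^ 4 := by
    filter_upwards [hXbd] with ω hω i j k l
    calc |X i j ω * X k l ω| = |X i j ω| * |X k l ω| := abs_mul _ _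
    _ ≤ (8 * M ^ 2) * (8 * M ^ 2) :=
        mul_le_mul (hω i j) (hω k l) (abs_nonneg _) (by positivity)
    _ = 64 * M ^ 4 := by ring
  have hXXint : ∀ i j k l, Integrable (fun ω => X i j ω * X k l ω) P := fun i j k l => by
    refine (integrable_const (64 * M ^ 4)).mono'
      ((hXmeas i j).mul (hXmeas k l)).aestronglyMeasurable ?_
    filter_upwards [hXXbd] with ω hω
    rw [Real.norm_eq_abs]; exact hω i j k l
  set c : Fin n → Fin n → Fin n → Fin n → ℝ := fun i j k l => ∫ ω, X i j ω * X k l ω ∂P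
    with hcdef
  have hcbd : ∀ i j k l, |c i j k l| ≤ 64 * M ^ 4 := by
    intro i j k l
    calc |c i j k l| ≤ ∫ ω, |X i j ω * X k l ω| ∂P := habs _
    _ ≤ ∫ _ω, 64 * M ^ 4 ∂P := by
        refine integral_mono_ae (hXXint i j k l).abs (integrable_const _) ?_
        filter_upwards [hXXbd] with ω hω using hω i j k l
    _ = 64 * M ^ 4 := by simp
  have hcov' : ∀ i j k l : Fin n,
      ¬(h i j = 1 ∧ h k l = 1 ∧ (h i k = 1 ∨ h i l = 1 ∨ h j k = 1 ∨ h j l = 1)) →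
      c i j k l = 0 := fun i j k l hn => hcov i j k l hn
  have hμ2symm : ∀ i j, μ2 i j = μ2 j i := by
    intro i j
    simp only [hμ2def]
    exact integral_congr_ae (Filter.Eventually.of_forall fun ω => mul_comm _ _)
  have hXsymm : ∀ i j, X i j = X j i := by
    intro i j
    funext ω
    simp only [hXdef]
    rw [hμ2symm i j, mul_comm]
  have hvanish : ∀ i j, h i j ≠ 1 → X i j =ᵐ[P] 0 := by
    intro i j hij
    have h0 : c i j i j = 0 := hcov' i j i j (by rintro ⟨e, -⟩; exact hij e)
    have h0' : ∫ ω, X i j ω ^ 2 ∂P = 0 := by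
      rw [← h0]
      simp only [hcdef]
      exact integral_congr_ae (Filter.Eventually.of_forall fun ω => (sq (X i j ω)))
    have hsq : (fun ω => X i j ω ^ 2) =ᵐ[P] 0 := by
      rw [← integral_eq_zero_iff_of_nonneg (fun ω => sq_nonneg _)
        (((hXXint i j i j).congr (Filter.Eventually.of_forall fun ω => (sq (X i j ω)).symm)))]
      exact h0'
    filter_upwards [hsq] with ω hω
    simpa using hω
  -- zero covariance whenever the "transpose" edge is absent
  have hczero₁ : ∀ i j k l, h j i ≠ 1 → c i j k l = 0 := by
    intro i j k l hji
    have hz : (fun ω => X i j ω * X k l ω) =ᵐ[P] (fun _ => 0) := by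
      filter_upwards [hvanish j i hji] with ω hω
      rw [hXsymm i j]
      simp only [Pi.zero_apply] at hω
      rw [hω, zero_mul]
    simp only [hcdef]
    rw [integral_congr_ae hz, integral_zero]
  have hczero₂ : ∀ i j k l, h l k ≠ 1 → c i j k l = 0 := by
    intro i j k l hlk
    have hz : (fun ω => X i j ω * X k l ω) =ᵐ[P] (fun _ => 0) := by
      filter_upwards [hvanish l k hlk] with ω hω
      rw [hXsymm k l]
      simp only [Pi.zero_apply] at hω
      rw [hω, mul_zero]
    simp only [hcdef]
    rw [integral_congr_ae hz, integral_zero]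
  -- measurability and boundedness of S
  have hSmeas : Measurable (fun ω => ∑ i, ∑ j, h i j * Z i ω * Z j ω) := by
    refine Finset.measurable_sum _ fun i _ => Finset.measurable_sum _ fun j _ => ?_
    exact ((measurable_const.mul (hZmeas i)).mul (hZmeas j))
  have hSbd : ∀ᵐ ω ∂P, |∑ i, ∑ j, h i j * Z i ω * Z j ω| ≤ (n : ℝ) * ((n : ℝ) * (4 * M ^ 2)) := by
    filter_upwards [hZZbd] with ω hω
    calc |∑ i, ∑ j, h i j * Z i ω * Z j ω| ≤ ∑ i, |∑ j, h i j * Z i ω * Z j ω| :=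
        Finset.abs_sum_le_sum_abs _ _
    _ ≤ ∑ i, ∑ j, |h i j * Z i ω * Z j ω| :=
        Finset.sum_le_sum fun i _ => Finset.abs_sum_le_sum_abs _ _
    _ ≤ ∑ i : Fin n, ∑ j : Fin n, 4 * M ^ 2 := by
        refine Finset.sum_le_sum fun i _ => Finset.sum_le_sum fun j _ => ?_
        have e : |h i j * Z i ω * Z j ω| = h i j * |Z i ω * Z j ω| := by
          rw [mul_assoc, abs_mul, abs_of_nonneg (hnn i j)]
        rw [e]
        calc h i j * |Z i ω * Z j ω| ≤ 1 * (4 * M ^ 2) :=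
            mul_le_mul (hle1 i j) (hω i j) (abs_nonneg _) zero_le_one
        _ = 4 * M ^ 2 := one_mul _
    _ = (n : ℝ) * ((n : ℝ) * (4 * M ^ 2)) := by
        simp [Finset.sum_const, Finset.card_univ, nsmul_eq_mul]
  have hmem : MemLp (fun ω => ∑ i, ∑ j, h i j * Z i ω * Z j ω) 2 P := by
    refine MemLp.of_bound hSmeas.aestronglyMeasurable ((n : ℝ) * ((n : ℝ) * (4 * M ^ 2))) ?_
    filter_upwards [hSbd] with ω hω
    rw [Real.norm_eq_abs]; exact hω
  have hES : ∫ ω, (∑ i, ∑ j, h i j * Z i ω * Z j ω) ∂P = ∑ i, ∑ j, h i j * μ2 i j := by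
    have hint : ∀ i j : Fin n, Integrable (fun ω => h i j * Z i ω * Z j ω) P := fun i j =>
      ((hZZint i j).const_mul (h i j)).congr (Filter.Eventually.of_forall fun ω => by ring)
    rw [integral_finset_sum _ fun i _ => integrable_finset_sum _ fun j _ => hint i j]
    refine Finset.sum_congr rfl fun i _ => ?_
    rw [integral_finset_sum _ fun j _ => hint i j]
    refine Finset.sum_congr rfl fun j _ => ?_
    calc ∫ ω, h i j * Z i ω * Z j ω ∂P = ∫ ω, h i j * (Z i ω * Z j ω) ∂P :=
        integral_congr_ae (Filter.Eventually.of_forall fun ω => by ring)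
    _ = h i j * μ2 i j := integral_const_mul _ _
  rw [variance_eq_integral hmem.aemeasurable]
  have hpt : ∀ ω : Ω, (((fun ω : Ω => ∑ i, ∑ j, h i j * Z i ω * Z j ω) -
      fun _ : Ω => ∫ ω', ∑ i, ∑ j, h i j * Z i ω' * Z j ω' ∂P) ^ 2) ω =
      ∑ i, ∑ j, ∑ k, ∑ l, (h i j * h k l) * (X i j ω * X k l ω) := by
    intro ω
    simp only [Pi.pow_apply, Pi.sub_apply, hES]
    have e1 : (∑ i, ∑ j, h i j * Z i ω * Z j ω) - (∑ i, ∑ j, h i j * μ2 i j) =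
        ∑ i, ∑ j, h i j * X i j ω := by
      rw [← Finset.sum_sub_distrib]
      refine Finset.sum_congr rfl fun i _ => ?_
      rw [← Finset.sum_sub_distrib]
      refine Finset.sum_congr rfl fun j _ => ?_
      simp only [hXdef]; ring
    rw [e1, sq]
    simp only [Finset.sum_mul, Finset.mul_sum]
    refine Finset.sum_congr rfl fun i _ => Finset.sum_congr rfl fun j _ =>
      Finset.sum_congr rfl fun k _ => Finset.sum_congr rfl fun l _ => by ring
  have hvar : ∫ ω, (((fun ω : Ω => ∑ i, ∑ j, h i j * Z i ω * Z j ω) -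
      fun _ : Ω => ∫ ω', ∑ i, ∑ j, h i j * Z i ω' * Z j ω' ∂P) ^ 2) ω ∂P =
      ∑ i, ∑ j, ∑ k, ∑ l, (h i j * h k l) * c i j k l := by
    have hint4 : ∀ i j k l : Fin n,
        Integrable (fun ω => (h i j * h k l) * (X i j ω * X k l ω)) P := fun i j k l =>
      (hXXint i j k l).const_mul _
    rw [integral_congr_ae (Filter.Eventually.of_forall hpt)]
    rw [integral_finset_sum _ fun i _ => integrable_finset_sum _ fun j _ =>
      integrable_finset_sum _ fun k _ => integrable_finset_sum _ fun l _ => hint4 i j k l]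
    refine Finset.sum_congr rfl fun i _ => ?_
    rw [integral_finset_sum _ fun j _ => integrable_finset_sum _ fun k _ =>
      integrable_finset_sum _ fun l _ => hint4 i j k l]
    refine Finset.sum_congr rfl fun j _ => ?_
    rw [integral_finset_sum _ fun k _ => integrable_finset_sum _ fun l _ => hint4 i j k l]
    refine Finset.sum_congr rfl fun k _ => ?_
    rw [integral_finset_sum _ fun l _ => hint4 i j k l]
    refine Finset.sum_congr rfl fun l _ => ?_
    exact integral_const_mul _ _
  refine le_trans (le_of_eq hvar) ?_
  -- the symmetrized adjacency
  set g : Fin n → Fin n → ℝ := fun i j => h i j * h j i with hgdef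
  have hg0 : ∀ i j, 0 ≤ g i j := fun i j => mul_nonneg (hnn i j) (hnn j i)
  have hgsym : ∀ i j, g i j = g j i := fun i j => mul_comm _ _
  have hgK : ∀ i, ∑ j, g i j ≤ (K : ℝ) := by
    intro i
    refine le_trans (Finset.sum_le_sum fun j _ => ?_) (hrow i)
    simpa [hgdef] using mul_le_of_le_one_right (hnn i j) (hle1 j i)
  have hterm : ∀ i j k l : Fin n, (h i j * h k l) * c i j k l ≤
      64 * M ^ 4 * (g i j * g k l * (h i k + h i l + h j k + h j l)) := by
    intro i j k l
    have hRnn : 0 ≤ 64 * M ^ 4 * (g i j * g k l * (h i k + h i l + h j k + h j l)) := by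
      refine mul_nonneg (by positivity) (mul_nonneg (mul_nonneg (hg0 i j) (hg0 k l)) ?_)
      linarith [hnn i k, hnn i l, hnn j k, hnn j l]
    by_cases hij : h i j = 1
    · by_cases hkl : h k l = 1
      · by_cases hji : h j i = 1
        · by_cases hlk : h l k = 1
          · by_cases hlink : h i k = 1 ∨ h i l = 1 ∨ h j k = 1 ∨ h j l = 1
            · have hsum : (1:ℝ) ≤ h i k + h i l + h j k + h j l := by
                rcases hlink with e | e | e | e <;>
                  rw [e] <;> linarith [hnn i k, hnn i l, hnn j k, hnn j l]
              have hgij : g i j = 1 := by simp only [hgdef]; rw [hij, hji, mul_one]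
              have hgkl : g k l = 1 := by simp only [hgdef]; rw [hkl, hlk, mul_one]
              calc (h i j * h k l) * c i j k l = c i j k l := by rw [hij, hkl]; ring
              _ ≤ |c i j k l| := le_abs_self _
              _ ≤ 64 * M ^ 4 := hcbd i j k l
              _ ≤ 64 * M ^ 4 * (g i j * g k l * (h i k + h i l + h j k + h j l)) := by
                  rw [hgij, hgkl, one_mul, one_mul]
                  nlinarith [pow_nonneg hM 4, hsum]
            · rw [hcov' i j k l (by tauto), mul_zero]; exact hRnn
          · rw [hczero₂ i j k l hlk, mul_zero]; exact hRnn
        · rw [hczero₁ i j k l hji, mul_zero]; exact hRnn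
      · rw [hcov' i j k l (by tauto), mul_zero]; exact hRnn
    · rw [hcov' i j k l (by tauto), mul_zero]; exact hRnn
  calc ∑ i, ∑ j, ∑ k, ∑ l, (h i j * h k l) * c i j k l
      ≤ ∑ i, ∑ j, ∑ k, ∑ l, 64 * M ^ 4 * (g i j * g k l * (h i k + h i l + h j k + h j l)) := by
        refine Finset.sum_le_sum fun i _ => Finset.sum_le_sum fun j _ =>
          Finset.sum_le_sum fun k _ => Finset.sum_le_sum fun l _ => hterm i j k l
    _ = 64 * M ^ 4 * ∑ i, ∑ j, ∑ k, ∑ l, g i j * g k l * (h i k + h i l + h j k + h j l) := by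
        simp only [← Finset.mul_sum]
    _ ≤ 64 * M ^ 4 * (4 * n * (K : ℝ) ^ 3) := by
        refine mul_le_mul_of_nonneg_left ?_ (by positivity)
        exact hac_count g h (K : ℝ) hg0 hnn hgsym hgK hrow hKnn
    _ = 256 * n * (K : ℝ) ^ 3 * M ^ 4 := by ring
end
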